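/- There are precisely nine model structures on the category of types: a triple (C, F, W) of classes of functions is a model structure if and only if it equals one of the following nine triples (writing, for f : A → B, 'de' for 'A empty', 'ne' for 'A nonempty', 'ce' for 'B empty'): (1) C = bijections, F = all, W = all; (2) C = surjections, F = injections, W = all; (3) C = {f injective and (ne or ce)}, F = {f surjective or de}, W = all; (4) C = {ne or ce}, F = {f bijective or de}, W = all; (5) C = injections, F = surjections, W = all; (6) C = all, F = bijections, W = all; (7) C = injections, F = {f surjective or de}, W = {ne or ce}; (8) C = all, F = {f bijective or de}, W = {ne or ce}; (9) C = all, F = all, W = bijections. -/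

import Mathlib

universe u

open CategoryTheory

/-- Weak factorization system. -/
def IsWFS {C : Type*} [Category C] (L R : MorphismProperty C) : Prop :=
  (∀ {A B : C} (f : A ⟶ B), ∃ (E : C) (l : A ⟶ E) (r : E ⟶ B), L l ∧ R r ∧ l ≫ r = f) ∧
    (∀ {A B : C} (l : A ⟶ B), L l ↔ ∀ {X Y : C} (r : X ⟶ Y), R r → HasLiftingProperty l r) ∧
    (∀ {X Y : C} (r : X ⟶ Y), R r ↔ ∀ {A B : C} (l : A ⟶ B), L l → HasLiftingProperty l r)

/-- The 2-out-of-3 property for a class of morphisms. -/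
def TwoOutOfThree {C : Type*} [Category C] (W : MorphismProperty C) : Prop :=
  ∀ {A B D : C} (f : A ⟶ B) (g : B ⟶ D),
    (W f → W g → W (f ≫ g)) ∧ (W f → W (f ≫ g) → W g) ∧ (W g → W (f ≫ g) → W f)

/-- The intersection of two classes of morphisms. -/
def interMP {C : Type*} [Category C] (P Q : MorphismProperty C) : MorphismProperty C :=
  fun _ _ f => P f ∧ Q f

/-- A model structure: `W` satisfies 2-out-of-3 and both `(C ∩ W, F)` and
`(C, F ∩ W)` are weak factorization systems. -/
def IsModelStructure {𝒞 : Type*} [Category 𝒞] (C F W : MorphismProperty 𝒞) : Prop :=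
  TwoOutOfThree W ∧ IsWFS (interMP C W) F ∧ IsWFS C (interMP F W)

namespace SetWFS
noncomputable section
open Classical

lemma hlp_iff {A B X Y : Type u} (i : A ⟶ B) (p : X ⟶ Y) :
    HasLiftingProperty i p ↔ ∀ (f : A ⟶ X) (g : B ⟶ Y), (∀ a, p (f a) = g (i a)) →
      ∃ h : B ⟶ X, (∀ a, h (i a) = f a) ∧ (∀ b, p (h b) = g b) := by
  constructor
  · intro hlp f g hw
    have sq : CommSq f i p g := ⟨ConcreteCategory.hom_ext _ _ fun a => hw a⟩
    exact ⟨sq.lift, fun a => ConcreteCategory.congr_hom sq.fac_left a,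
      fun b => ConcreteCategory.congr_hom sq.fac_right b⟩
  · intro H
    constructor
    intro f g sq
    obtain ⟨h, h1, h2⟩ := H f g (fun a => ConcreteCategory.congr_hom sq.w a)
    exact ⟨⟨⟨h, ConcreteCategory.hom_ext _ _ h1, ConcreteCategory.hom_ext _ _ h2⟩⟩⟩

/-! ### Classes -/

def Bj : MorphismProperty (Type u) := fun _ _ f => Function.Bijective f
def Ij : MorphismProperty (Type u) := fun _ _ f => Function.Injective f
def Sj : MorphismProperty (Type u) := fun _ _ f => Function.Surjective f
def Al : MorphismProperty (Type u) := fun _ _ _ => True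
def NEC : MorphismProperty (Type u) := fun A B _ => Nonempty A ∨ IsEmpty B
def IN : MorphismProperty (Type u) := fun A B f => Function.Injective f ∧ (Nonempty A ∨ IsEmpty B)
def SD : MorphismProperty (Type u) := fun A _ f => Function.Surjective f ∨ IsEmpty A
def BD : MorphismProperty (Type u) := fun A _ f => Function.Bijective f ∨ IsEmpty A

/-! ### Test maps -/

def E0 : Type u := PEmpty
def T1 : Type u := PUnit
def T2 : Type u := ULift Bool

def eMap : E0.{u} ⟶ T1.{u} := TypeCat.ofHom fun (_ : PEmpty) => PUnit.unit
def e2Map : E0.{u} ⟶ T2.{u} := TypeCat.ofHom fun (x : PEmpty) => x.elim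
def sMap : T2.{u} ⟶ T1.{u} := TypeCat.ofHom fun (_ : ULift Bool) => PUnit.unit
def mMap : T1.{u} ⟶ T2.{u} := TypeCat.ofHom fun (_ : PUnit) => (⟨true⟩ : ULift Bool)

instance : IsEmpty E0.{u} := ⟨fun x => x.elim⟩
instance : Nonempty T1.{u} := ⟨PUnit.unit⟩

lemma sMap_surj : Function.Surjective sMap.{u} := fun y => ⟨⟨true⟩, rfl⟩
lemma sMap_not_inj : ¬ Function.Injective sMap.{u} := fun h => by
  have := congrArg ULift.down (h (a₁ := ⟨true⟩) (a₂ := ⟨false⟩) rfl)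
  simp at this
lemma mMap_inj : Function.Injective mMap.{u} := fun a b _ => rfl
lemma mMap_not_surj : ¬ Function.Surjective mMap.{u} := fun h => by
  obtain ⟨x, hx⟩ := h ⟨false⟩
  have := congrArg ULift.down hx
  simp [mMap] at this
lemma eMap_inj : Function.Injective eMap.{u} := fun a => a.elim
lemma sMap_ne_ab : (⟨true⟩ : T2.{u}) ≠ ⟨false⟩ := by simp [ULift.ext_iff]

/-! ### Lifting constructions -/

variable {A B X Y : Type u}

lemma lift_of_left_bij {i : A ⟶ B} (p : X ⟶ Y) (hi : Function.Bijective i) :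
    HasLiftingProperty i p := by
  rw [hlp_iff]
  intro f g hw
  obtain ⟨inv, hinv1, hinv2⟩ := Function.bijective_iff_has_inverse.mp hi
  refine ⟨TypeCat.ofHom fun b => f (inv b), fun a => ?_, fun b => ?_⟩
  · show f (inv (i a)) = f a
    rw [hinv1]
  · show p (f (inv b)) = g b
    rw [hw, hinv2]

lemma lift_of_right_bij (i : A ⟶ B) {p : X ⟶ Y} (hp : Function.Bijective p) :
    HasLiftingProperty i p := by
  rw [hlp_iff]
  intro f g hw
  obtain ⟨inv, hinv1, hinv2⟩ := Function.bijective_iff_has_inverse.mp hp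
  refine ⟨TypeCat.ofHom fun b => inv (g b), fun a => ?_, fun b => ?_⟩
  · show inv (g (i a)) = f a
    rw [← hw, hinv1]
  · show p (inv (g b)) = g b
    rw [hinv2]

lemma lift_surj_inj {i : A ⟶ B} {p : X ⟶ Y} (hi : Function.Surjective i)
    (hp : Function.Injective p) : HasLiftingProperty i p := by
  rw [hlp_iff]
  intro f g hw
  refine ⟨TypeCat.ofHom fun b => f (hi b).choose, fun a => ?_, fun b => ?_⟩
  · exact hp (by rw [TypeCat.ofHom_apply, hw, hw, (hi (i a)).choose_spec])
  · rw [TypeCat.ofHom_apply, hw, (hi b).choose_spec]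

lemma lift_inj_surj {i : A ⟶ B} {p : X ⟶ Y} (hi : Function.Injective i)
    (hp : Function.Surjective p) : HasLiftingProperty i p := by
  rw [hlp_iff]
  intro f g hw
  refine ⟨TypeCat.ofHom fun b => if h : ∃ a, i a = b then f h.choose else (hp (g b)).choose,
    fun a => ?_, fun b => ?_⟩
  · have h : ∃ a', i a' = i a := ⟨a, rfl⟩
    simp only [TypeCat.ofHom_apply, dif_pos h]
    exact congrArg f (hi h.choose_spec)
  · by_cases h : ∃ a, i a = b
    · simp only [TypeCat.ofHom_apply, dif_pos h]
      rw [hw, h.choose_spec]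
    · simp only [TypeCat.ofHom_apply, dif_neg h]
      exact (hp (g b)).choose_spec

lemma lift_of_right_de {i : A ⟶ B} (p : X ⟶ Y) (hX : IsEmpty X)
    (hi : Nonempty A ∨ IsEmpty B) : HasLiftingProperty i p := by
  rw [hlp_iff]
  intro f g hw
  have hA : IsEmpty A := ⟨fun a => hX.false (f a)⟩
  have hB : IsEmpty B := hi.resolve_left (by rwa [not_nonempty_iff])
  exact ⟨TypeCat.ofHom fun b => (hB.false b).elim, fun a => (hA.false a).elim, fun b => (hB.false b).elim⟩

lemma lift_IN_SD {i : A ⟶ B} {p : X ⟶ Y} (hi : IN i) (hp : SD p) : HasLiftingProperty i p := by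
  rcases hp with hp | hp
  · exact lift_inj_surj hi.1 hp
  · exact lift_of_right_de p hp hi.2

lemma lift_NEC_BD {i : A ⟶ B} {p : X ⟶ Y} (hi : NEC i) (hp : BD p) : HasLiftingProperty i p := by
  rcases hp with hp | hp
  · exact lift_of_right_bij i hp
  · exact lift_of_right_de p hp hi

/-! ### Detection lemmas -/

lemma det_nec {i : A ⟶ B} (h : HasLiftingProperty i eMap.{u}) : Nonempty A ∨ IsEmpty B := by
  by_cases hA : Nonempty A
  · exact Or.inl hA
  · rw [not_nonempty_iff] at hA
    rw [hlp_iff] at h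
    obtain ⟨l, -, -⟩ := h (TypeCat.ofHom fun a => (hA.false a).elim) (TypeCat.ofHom fun _ => PUnit.unit)
      (fun a => (hA.false a).elim)
    exact Or.inr ⟨fun b => (l b).elim⟩

lemma det_inj {i : A ⟶ B} (h : HasLiftingProperty i sMap.{u}) : Function.Injective i := by
  rw [hlp_iff] at h
  intro a a' hiaa
  obtain ⟨l, hl1, -⟩ := h (TypeCat.ofHom fun x => (⟨decide (x = a)⟩ : ULift Bool)) (TypeCat.ofHom fun _ => PUnit.unit) (fun _ => rfl)
  have h1 := hl1 a
  have h2 := hl1 a'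
  rw [hiaa] at h1
  have hd : decide (a = a) = decide (a' = a) := congrArg ULift.down (h1.symm.trans h2)
  exact ((decide_eq_decide.mp hd).mp rfl).symm

lemma det_surj {i : A ⟶ B} (h : HasLiftingProperty i mMap.{u}) : Function.Surjective i := by
  rw [hlp_iff] at h
  intro b
  by_cases hb : ∃ a, i a = b
  · exact hb
  · push_neg at hb
    obtain ⟨l, -, hl2⟩ := h (TypeCat.ofHom fun _ => PUnit.unit)
      (TypeCat.ofHom fun x => (⟨decide (x ≠ b)⟩ : ULift Bool)) (fun a => by
        show (⟨true⟩ : ULift Bool) = ⟨decide (i a ≠ b)⟩; simp [hb a])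
    have hd := congrArg ULift.down (hl2 b)
    change true = decide (b ≠ b) at hd
    simp at hd

lemma det_r_surj_of_empty {i : A ⟶ B} {p : X ⟶ Y} (hA : IsEmpty A) (b : B)
    (h : HasLiftingProperty i p) : Function.Surjective p := by
  rw [hlp_iff] at h
  intro y
  obtain ⟨l, -, hl2⟩ := h (TypeCat.ofHom fun a => (hA.false a).elim) (TypeCat.ofHom fun _ => y)
    (fun a => (hA.false a).elim)
  exact ⟨l b, hl2 b⟩

lemma det_r_inj {i : A ⟶ B} {p : X ⟶ Y} (a a' : A) (hne : a ≠ a') (heq : i a = i a')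
    (h : HasLiftingProperty i p) : Function.Injective p := by
  rw [hlp_iff] at h
  intro x x' hpxx
  obtain ⟨l, hl1, -⟩ := h (TypeCat.ofHom fun z => if z = a then x else x') (TypeCat.ofHom fun _ => p x)
    (fun z => by by_cases hz : z = a <;> simp [hz, hpxx])
  have h1 : l (i a) = x := by rw [hl1 a, TypeCat.ofHom_apply, if_pos rfl]
  have h2 : l (i a') = x' := by rw [hl1 a', TypeCat.ofHom_apply, if_neg (Ne.symm hne)]
  rw [← h1, ← h2, heq]

lemma det_r_surj {i : A ⟶ B} {p : X ⟶ Y} (b₀ : B) (hb : ∀ a, i a ≠ b₀) (x₀ : X)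
    (h : HasLiftingProperty i p) : Function.Surjective p := by
  rw [hlp_iff] at h
  intro y
  obtain ⟨l, -, hl2⟩ := h (TypeCat.ofHom fun _ => x₀) (TypeCat.ofHom fun b => if b = b₀ then y else p x₀)
    (fun a => by simp [hb a])
  have := hl2 b₀
  simp only [TypeCat.ofHom_apply, if_pos rfl] at this
  exact ⟨l b₀, this⟩

lemma det_r_bij {p : X ⟶ Y} (h : HasLiftingProperty p p) : Function.Bijective p := by
  rw [hlp_iff] at h
  obtain ⟨l, hl1, hl2⟩ := h (𝟙 X) (𝟙 Y) (fun _ => rfl)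
  exact Function.bijective_iff_has_inverse.mpr ⟨l, hl1, hl2⟩



lemma mMap_ne : ∀ a, mMap.{u} a ≠ (⟨false⟩ : T2.{u}) := fun _ h => by
  have := congrArg ULift.down h
  simp [mMap] at this

/-! ### The six weak factorization systems -/

lemma isWFS_1 : IsWFS Bj.{u} Al.{u} := by
  refine ⟨fun {A B} f => ⟨A, 𝟙 A, f, Function.bijective_id, trivial, Category.id_comp f⟩,
    fun {A B} l => ⟨fun hl {X Y} r _ => lift_of_left_bij r hl,
      fun h => det_r_bij (h l trivial)⟩,
    fun {X Y} r => ⟨fun _ {A B} l hl => lift_of_left_bij r hl, fun _ => trivial⟩⟩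

lemma isWFS_2 : IsWFS Sj.{u} Ij.{u} := by
  refine ⟨fun {A B} f => ⟨Set.range f, TypeCat.ofHom fun a => (⟨f a, ⟨a, rfl⟩⟩ : Set.range f),
        TypeCat.ofHom Subtype.val,
      fun b => ⟨b.2.choose, Subtype.ext b.2.choose_spec⟩, Subtype.val_injective, rfl⟩,
    fun {A B} l => ⟨fun hl {X Y} r hr => lift_surj_inj hl hr,
      fun h => det_surj (h mMap mMap_inj)⟩,
    fun {X Y} r => ⟨fun hr {A B} l hl => lift_surj_inj hl hr,
      fun h => det_r_inj ⟨true⟩ ⟨false⟩ sMap_ne_ab rfl (h sMap sMap_surj)⟩⟩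

lemma isWFS_5 : IsWFS Ij.{u} Sj.{u} := by
  refine ⟨fun {A B} f => ⟨Sum A B, TypeCat.ofHom Sum.inl, TypeCat.ofHom (Sum.elim f id), Sum.inl_injective,
      fun b => ⟨Sum.inr b, rfl⟩, rfl⟩,
    fun {A B} l => ⟨fun hl {X Y} r hr => lift_inj_surj hl hr,
      fun h => det_inj (h sMap sMap_surj)⟩,
    fun {X Y} r => ⟨fun hr {A B} l hl => lift_inj_surj hl hr,
      fun h => det_r_surj_of_empty (inferInstance : IsEmpty E0) PUnit.unit
        (h eMap eMap_inj)⟩⟩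

lemma isWFS_3 : IsWFS IN.{u} SD.{u} := by
  refine ⟨fun {A B} f => ?_,
    fun {A B} l => ⟨fun hl {X Y} r hr => lift_IN_SD hl hr,
      fun h => ⟨det_inj (h sMap (Or.inl sMap_surj)),
        det_nec (h eMap (Or.inr inferInstance))⟩⟩,
    fun {X Y} r => ⟨fun hr {A B} l hl => lift_IN_SD hl hr, fun h => ?_⟩⟩
  · by_cases hA : Nonempty A
    · exact ⟨Sum A B, TypeCat.ofHom Sum.inl, TypeCat.ofHom (Sum.elim f id), ⟨Sum.inl_injective, Or.inl hA⟩,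
        Or.inl (fun b => ⟨Sum.inr b, rfl⟩), rfl⟩
    · rw [not_nonempty_iff] at hA
      exact ⟨A, 𝟙 A, f, ⟨fun _ _ h => h, Or.inr hA⟩, Or.inr hA, Category.id_comp f⟩
  · by_cases hX : IsEmpty X
    · exact Or.inr hX
    · rw [not_isEmpty_iff] at hX
      obtain ⟨x₀⟩ := hX
      exact Or.inl (det_r_surj ⟨false⟩ mMap_ne x₀
        (h mMap ⟨mMap_inj, Or.inl ⟨PUnit.unit⟩⟩))

lemma isWFS_4 : IsWFS NEC.{u} BD.{u} := by
  refine ⟨fun {A B} f => ?_,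
    fun {A B} l => ⟨fun hl {X Y} r hr => lift_NEC_BD hl hr,
      fun h => det_nec (h eMap (Or.inr inferInstance))⟩,
    fun {X Y} r => ⟨fun hr {A B} l hl => lift_NEC_BD hl hr, fun h => ?_⟩⟩
  · by_cases hA : Nonempty A
    · exact ⟨B, f, 𝟙 B, Or.inl hA, Or.inl Function.bijective_id, Category.comp_id f⟩
    · rw [not_nonempty_iff] at hA
      exact ⟨A, 𝟙 A, f, Or.inr hA, Or.inr hA, Category.id_comp f⟩
  · by_cases hX : IsEmpty X
    · exact Or.inr hX
    · rw [not_isEmpty_iff] at hX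
      obtain ⟨x₀⟩ := hX
      exact Or.inl ⟨det_r_inj ⟨true⟩ ⟨false⟩ sMap_ne_ab rfl (h sMap (Or.inl ⟨⟨true⟩⟩)),
        det_r_surj ⟨false⟩ mMap_ne x₀ (h mMap (Or.inl ⟨PUnit.unit⟩))⟩

lemma isWFS_6 : IsWFS Al.{u} Bj.{u} := by
  refine ⟨fun {A B} f => ⟨B, f, 𝟙 B, trivial, Function.bijective_id, Category.comp_id f⟩,
    fun {A B} l => ⟨fun _ {X Y} r hr => lift_of_right_bij l hr, fun _ => trivial⟩,
    fun {X Y} r => ⟨fun hr {A B} l _ => lift_of_right_bij l hr,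
      fun h => det_r_bij (h r trivial)⟩⟩
/-! ### Classification of weak factorization systems -/

lemma mp_ext {P Q : MorphismProperty (Type u)}
    (h : ∀ (A B : Type u) (f : A ⟶ B), P f ↔ Q f) : P = Q :=
  funext fun A => funext fun B => funext fun f => propext (h A B f)

lemma surj_nec {A B : Type u} {f : A ⟶ B} (h : Function.Surjective f) :
    Nonempty A ∨ IsEmpty B := by
  by_cases hB : Nonempty B
  · obtain ⟨b⟩ := hB
    obtain ⟨a, -⟩ := h b
    exact Or.inl ⟨a⟩
  · exact Or.inr (not_nonempty_iff.mp hB)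

lemma wfs_classify {L R : MorphismProperty (Type u)} (h : IsWFS L R) :
    (L = Bj.{u} ∧ R = Al.{u}) ∨ (L = Sj.{u} ∧ R = Ij.{u}) ∨ (L = IN.{u} ∧ R = SD.{u}) ∨
    (L = NEC.{u} ∧ R = BD.{u}) ∨ (L = Ij.{u} ∧ R = Sj.{u}) ∨ (L = Al.{u} ∧ R = Bj.{u}) := by
  obtain ⟨hfac, hL, hR⟩ := h
  have lift_LR : ∀ {A B X Y : Type u} (l : A ⟶ B) (r : X ⟶ Y),
      L l → R r → HasLiftingProperty l r := fun l r hl hr => (hL l).mp hl r hr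
  have Ha : R eMap → ∀ {A B : Type u} {l : A ⟶ B}, L l → (Nonempty A ∨ IsEmpty B) :=
    fun ha _ _ l hl => det_nec (lift_LR l eMap hl ha)
  have Hb : R sMap → ∀ {A B : Type u} {l : A ⟶ B}, L l → Function.Injective l :=
    fun hb _ _ l hl => det_inj (lift_LR l sMap hl hb)
  have Hc : R mMap → ∀ {A B : Type u} {l : A ⟶ B}, L l → Function.Surjective l :=
    fun hc _ _ l hl => det_surj (lift_LR l mMap hl hc)
  have Hna : ¬ R eMap → ∀ {X Y : Type u} {r : X ⟶ Y}, R r → Function.Surjective r := by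
    intro ha X Y r hr
    have h2 : ¬ ∀ (A B : Type u) (l : A ⟶ B), L l → HasLiftingProperty l eMap :=
      fun hall => ha ((hR eMap).mpr fun {A B} l hl => hall A B l hl)
    push_neg at h2
    obtain ⟨A₀, B₀, l₀, hl₀, hnl₀⟩ := h2
    have hnec : ¬ (Nonempty A₀ ∨ IsEmpty B₀) :=
      fun hn => hnl₀ (lift_NEC_BD hn (Or.inr inferInstance))
    rw [not_or, not_nonempty_iff, not_isEmpty_iff] at hnec
    obtain ⟨b₀⟩ := hnec.2
    exact det_r_surj_of_empty hnec.1 b₀ (lift_LR l₀ r hl₀ hr)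
  have Hnb : ¬ R sMap → ∀ {X Y : Type u} {r : X ⟶ Y}, R r → Function.Injective r := by
    intro hb X Y r hr
    have h2 : ¬ ∀ (A B : Type u) (l : A ⟶ B), L l → HasLiftingProperty l sMap :=
      fun hall => hb ((hR sMap).mpr fun {A B} l hl => hall A B l hl)
    push_neg at h2
    obtain ⟨A₀, B₀, l₀, hl₀, hnl₀⟩ := h2
    have hni : ¬ Function.Injective l₀ := fun hi => hnl₀ (lift_inj_surj hi sMap_surj)
    unfold Function.Injective at hni
    push_neg at hni
    obtain ⟨a, a', heq, hne⟩ := hni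
    exact det_r_inj a a' hne heq (lift_LR l₀ r hl₀ hr)
  have Hnc : ¬ R mMap → ∀ {X Y : Type u} {r : X ⟶ Y}, R r →
      (Function.Surjective r ∨ IsEmpty X) := by
    intro hc X Y r hr
    by_cases hX : IsEmpty X
    · exact Or.inr hX
    · rw [not_isEmpty_iff] at hX
      obtain ⟨x₀⟩ := hX
      have h2 : ¬ ∀ (A B : Type u) (l : A ⟶ B), L l → HasLiftingProperty l mMap :=
        fun hall => hc ((hR mMap).mpr fun {A B} l hl => hall A B l hl)
      push_neg at h2
      obtain ⟨A₀, B₀, l₀, hl₀, hnl₀⟩ := h2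
      have hns : ¬ Function.Surjective l₀ := fun hs => hnl₀ (lift_surj_inj hs mMap_inj)
      unfold Function.Surjective at hns
      push_neg at hns
      obtain ⟨b₀, hb₀⟩ := hns
      exact Or.inl (det_r_surj b₀ hb₀ x₀ (lift_LR l₀ r hl₀ hr))
  by_cases ha : R eMap
  · by_cases hb : R sMap
    · by_cases hc : R mMap
      · -- (T,T,T) : (Bj, Al)
        refine Or.inl ⟨mp_ext fun A B l => ⟨fun hl => ⟨Hb hb hl, Hc hc hl⟩,
          fun hl => (hL l).mpr fun r _ => lift_of_left_bij r hl⟩,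
          mp_ext fun X Y r => ⟨fun _ => trivial,
          fun _ => (hR r).mpr fun l hl => lift_of_left_bij r ⟨Hb hb hl, Hc hc hl⟩⟩⟩
      · -- (T,T,F) : (IN, SD)
        refine Or.inr (Or.inr (Or.inl ⟨mp_ext fun A B l =>
          ⟨fun hl => ⟨Hb hb hl, Ha ha hl⟩,
           fun hl => (hL l).mpr fun r hr => lift_IN_SD hl (Hnc hc hr)⟩,
          mp_ext fun X Y r => ⟨fun hr => Hnc hc hr,
           fun hr => (hR r).mpr fun l hl => lift_IN_SD ⟨Hb hb hl, Ha ha hl⟩ hr⟩⟩))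
    · by_cases hc : R mMap
      · -- (T,F,T) : (Sj, Ij)
        refine Or.inr (Or.inl ⟨mp_ext fun A B l =>
          ⟨fun hl => Hc hc hl,
           fun hl => (hL l).mpr fun r hr => lift_surj_inj hl (Hnb hb hr)⟩,
          mp_ext fun X Y r => ⟨fun hr => Hnb hb hr,
           fun hr => (hR r).mpr fun l hl => lift_surj_inj (Hc hc hl) hr⟩⟩)
      · -- (T,F,F) : (NEC, BD)
        have hRsub : ∀ {X Y : Type u} {r : X ⟶ Y}, R r → BD r := by
          intro X Y r hr
          rcases Hnc hc hr with hs | hX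
          · exact Or.inl ⟨Hnb hb hr, hs⟩
          · exact Or.inr hX
        refine Or.inr (Or.inr (Or.inr (Or.inl ⟨mp_ext fun A B l =>
          ⟨fun hl => Ha ha hl,
           fun hl => (hL l).mpr fun r hr => lift_NEC_BD hl (hRsub hr)⟩,
          mp_ext fun X Y r => ⟨fun hr => hRsub hr,
           fun hr => (hR r).mpr fun l hl => lift_NEC_BD (Ha ha hl) hr⟩⟩)))
  · have hRS : ∀ {X Y : Type u} {r : X ⟶ Y}, R r → Function.Surjective r := Hna ha
    have hc : ¬ R mMap := fun hc => mMap_not_surj (hRS hc)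
    by_cases hb : R sMap
    · -- (F,T,F) : (Ij, Sj)
      refine Or.inr (Or.inr (Or.inr (Or.inr (Or.inl ⟨mp_ext fun A B l =>
        ⟨fun hl => Hb hb hl,
         fun hl => (hL l).mpr fun r hr => lift_inj_surj hl (hRS hr)⟩,
        mp_ext fun X Y r => ⟨fun hr => hRS hr,
         fun hr => (hR r).mpr fun l hl => lift_inj_surj (Hb hb hl) hr⟩⟩))))
    · -- (F,F,F) : (Al, Bj)
      refine Or.inr (Or.inr (Or.inr (Or.inr (Or.inr ⟨mp_ext fun A B l =>
        ⟨fun _ => trivial,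
         fun _ => (hL l).mpr fun r hr => lift_of_right_bij l ⟨Hnb hb hr, hRS hr⟩⟩,
        mp_ext fun X Y r => ⟨fun hr => ⟨Hnb hb hr, hRS hr⟩,
         fun hr => (hR r).mpr fun l _ => lift_of_right_bij l hr⟩⟩))))
/-! ### Two-out-of-three lemmas -/

lemma two33_all : TwoOutOfThree Al.{u} :=
  fun _ _ => ⟨fun _ _ => trivial, fun _ _ => trivial, fun _ _ => trivial⟩

lemma two33_bij : TwoOutOfThree Bj.{u} := by
  intro A B D f g
  refine ⟨fun hf hg => hg.comp hf, fun hf hgf => ⟨?_, ?_⟩, fun hg hgf => ⟨?_, ?_⟩⟩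
  · intro x y hxy
    obtain ⟨a, rfl⟩ := hf.2 x
    obtain ⟨b, rfl⟩ := hf.2 y
    exact congrArg f (hgf.1 (show g (f a) = g (f b) from hxy))
  · intro d
    obtain ⟨a, ha⟩ := hgf.2 d
    exact ⟨f a, ha⟩
  · exact fun x y hxy => hgf.1 (show g (f x) = g (f y) from congrArg g hxy)
  · intro b
    obtain ⟨a, ha⟩ := hgf.2 (g b)
    exact ⟨a, hg.1 ha⟩

lemma two33_nec : TwoOutOfThree NEC.{u} := by
  intro A B D f g
  refine ⟨?_, ?_, ?_⟩
  · rintro (hA | hB) hg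
    · exact Or.inl hA
    · rcases hg with hB' | hD
      · exact (hB.false hB'.some).elim
      · exact Or.inr hD
  · rintro hf hgf
    rcases hgf with hA | hD
    · exact Or.inl ⟨f hA.some⟩
    · exact Or.inr hD
  · rintro hg hgf
    rcases hgf with hA | hD
    · exact Or.inl hA
    · exact Or.inr ⟨fun b => hD.false (g b)⟩

/-! ### The weak equivalences are determined by the two WFSs -/

lemma mp_app {P Q : MorphismProperty (Type u)} (h : P = Q) {A B : Type u} (f : A ⟶ B) :
    P f ↔ Q f := by rw [h]

lemma model_W_char {C F W : MorphismProperty (Type u)} (h : IsModelStructure C F W)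
    {A B : Type u} (f : A ⟶ B) :
    W f ↔ ∃ (E : Type u) (l : A ⟶ E) (r : E ⟶ B),
      interMP C W l ∧ interMP F W r ∧ l ≫ r = f := by
  obtain ⟨h23, h1, h2⟩ := h
  constructor
  · intro hw
    obtain ⟨E, l, r, hl, hr, hc⟩ := h1.1 f
    exact ⟨E, l, r, hl, ⟨hr, (h23 l r).2.1 hl.2 (by rwa [hc])⟩, hc⟩
  · rintro ⟨E, l, r, hl, hr, hc⟩
    have := (h23 l r).1 hl.2 hr.2
    rwa [hc] at this

/-! ### interMP computations -/

lemma interMP_all_right (P : MorphismProperty (Type u)) : interMP P Al.{u} = P :=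
  mp_ext fun _ _ _ => ⟨fun h => h.1, fun h => ⟨h, trivial⟩⟩

lemma interMP_all_left (P : MorphismProperty (Type u)) : interMP Al.{u} P = P :=
  mp_ext fun _ _ _ => ⟨fun h => h.2, fun h => ⟨trivial, h⟩⟩

lemma interMP_SD_NEC : interMP SD.{u} NEC.{u} = Sj.{u} := by
  refine mp_ext fun X Y r => ⟨?_, fun hs => ⟨Or.inl hs, surj_nec hs⟩⟩
  rintro ⟨hsd, hnec⟩
  rcases hsd with hs | hX
  · exact hs
  · rcases hnec with hX' | hY
    · exact (hX.false hX'.some).elim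
    · exact fun y => (hY.false y).elim

lemma interMP_BD_NEC : interMP BD.{u} NEC.{u} = Bj.{u} := by
  refine mp_ext fun X Y r => ⟨?_, fun hb => ⟨Or.inl hb, surj_nec hb.2⟩⟩
  rintro ⟨hbd, hnec⟩
  rcases hbd with hb | hX
  · exact hb
  · rcases hnec with hX' | hY
    · exact (hX.false hX'.some).elim
    · exact ⟨fun a => (hX.false a).elim, fun y => (hY.false y).elim⟩

/-! ### Extra facts about the test maps -/

lemma e_not_nec : ¬ (Nonempty E0.{u} ∨ IsEmpty T1.{u}) := by
  rintro (hx | h)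
  · exact (inferInstance : IsEmpty E0.{u}).false hx.some
  · exact h.false PUnit.unit

lemma ms_eq : mMap.{u} ≫ sMap.{u} = 𝟙 T1.{u} := by
  ext x
  rfl

lemma em_eq : eMap.{u} ≫ mMap.{u} = e2Map.{u} := by
  ext x
  exact x.elim
end
end SetWFS

open SetWFS

/-- **The nine model structures on the category of sets (Goodwillie).** -/
theorem set_model_structure_classification (C F W : MorphismProperty (Type u)) :
    IsModelStructure C F W ↔
      ((C = (fun (X Y : Type u) (f : X ⟶ Y) => Function.Bijective ⇑f) ∧ F = (fun _ _ _ => True) ∧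
          W = (fun _ _ _ => True)) ∨
       (C = (fun (X Y : Type u) (f : X ⟶ Y) => Function.Surjective ⇑f) ∧ F = (fun (X Y : Type u) (f : X ⟶ Y) => Function.Injective ⇑f) ∧
          W = (fun _ _ _ => True)) ∨
       (C = (fun (A B : Type u) (f : A ⟶ B) => Function.Injective ⇑f ∧ (Nonempty A ∨ IsEmpty B)) ∧
          F = (fun (A Y : Type u) (f : A ⟶ Y) => Function.Surjective ⇑f ∨ IsEmpty A) ∧
          W = (fun _ _ _ => True)) ∨
       (C = (fun A B _ => Nonempty A ∨ IsEmpty B) ∧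
          F = (fun (A Y : Type u) (f : A ⟶ Y) => Function.Bijective ⇑f ∨ IsEmpty A) ∧
          W = (fun _ _ _ => True)) ∨
       (C = (fun (X Y : Type u) (f : X ⟶ Y) => Function.Injective ⇑f) ∧ F = (fun (X Y : Type u) (f : X ⟶ Y) => Function.Surjective ⇑f) ∧
          W = (fun _ _ _ => True)) ∨
       (C = (fun _ _ _ => True) ∧ F = (fun (X Y : Type u) (f : X ⟶ Y) => Function.Bijective ⇑f) ∧
          W = (fun _ _ _ => True)) ∨
       (C = (fun (X Y : Type u) (f : X ⟶ Y) => Function.Injective ⇑f) ∧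
          F = (fun (A Y : Type u) (f : A ⟶ Y) => Function.Surjective ⇑f ∨ IsEmpty A) ∧
          W = (fun A B _ => Nonempty A ∨ IsEmpty B)) ∨
       (C = (fun _ _ _ => True) ∧
          F = (fun (A Y : Type u) (f : A ⟶ Y) => Function.Bijective ⇑f ∨ IsEmpty A) ∧
          W = (fun A B _ => Nonempty A ∨ IsEmpty B)) ∨
       (C = (fun _ _ _ => True) ∧ F = (fun _ _ _ => True) ∧
          W = (fun (X Y : Type u) (f : X ⟶ Y) => Function.Bijective ⇑f))) := by
  constructor
  · intro h
    have h23 : TwoOutOfThree W := h.1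
    have h1 : IsWFS (interMP C W) F := h.2.1
    have h2 : IsWFS C (interMP F W) := h.2.2
    have hWchar := fun {A B : Type u} (f : A ⟶ B) => model_W_char h f
    rcases wfs_classify h1 with ⟨hCW, hF⟩ | ⟨hCW, hF⟩ | ⟨hCW, hF⟩ | ⟨hCW, hF⟩ |
        ⟨hCW, hF⟩ | ⟨hCW, hF⟩ <;>
      rcases wfs_classify h2 with ⟨hC, hFW⟩ | ⟨hC, hFW⟩ | ⟨hC, hFW⟩ | ⟨hC, hFW⟩ |
        ⟨hC, hFW⟩ | ⟨hC, hFW⟩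
    -- (1,1) : model structure 1
    · refine Or.inl ⟨hC, hF, mp_ext fun A B f => ⟨fun _ => trivial, fun _ => ?_⟩⟩
      obtain ⟨E, l, r, hl, hr, hcmp⟩ := isWFS_1.{u}.1 f
      exact (hWchar f).mpr ⟨E, l, r, (mp_app hCW l).mpr hl, (mp_app hFW r).mpr hr, hcmp⟩
    -- (1,2) : impossible via 2-out-of-3
    · exfalso
      have hWm : W mMap := ((mp_app hFW mMap).mpr mMap_inj).2
      have hWid : W (𝟙 T1.{u}) := ((mp_app hFW (𝟙 T1.{u})).mpr Function.injective_id).2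
      have hWms : W (mMap ≫ sMap) := by rw [ms_eq]; exact hWid
      have hWs : W sMap := (h23 mMap sMap).2.1 hWm hWms
      have hCs : C sMap := (mp_app hC sMap).mpr sMap_surj
      exact sMap_not_inj ((mp_app hCW sMap).mp ⟨hCs, hWs⟩).1
    -- (1,3)
    · exfalso
      have hWs : W sMap := ((mp_app hFW sMap).mpr (Or.inl sMap_surj)).2
      have hWid : W (𝟙 T1.{u}) :=
        ((mp_app hFW (𝟙 T1.{u})).mpr (Or.inl Function.surjective_id)).2
      have hWms : W (mMap ≫ sMap) := by rw [ms_eq]; exact hWid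
      have hWm : W mMap := (h23 mMap sMap).2.2 hWs hWms
      have hCm : C mMap := (mp_app hC mMap).mpr ⟨mMap_inj, Or.inl ⟨PUnit.unit⟩⟩
      exact mMap_not_surj ((mp_app hCW mMap).mp ⟨hCm, hWm⟩).2
    -- (1,4)
    · exfalso
      have hWe : W eMap := ((mp_app hFW eMap).mpr (Or.inr inferInstance)).2
      have hWe2 : W e2Map := ((mp_app hFW e2Map).mpr (Or.inr inferInstance)).2
      have hWem : W (eMap ≫ mMap) := by rw [em_eq]; exact hWe2
      have hWm : W mMap := (h23 eMap mMap).2.1 hWe hWem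
      have hCm : C mMap := (mp_app hC mMap).mpr (Or.inl ⟨PUnit.unit⟩)
      exact mMap_not_surj ((mp_app hCW mMap).mp ⟨hCm, hWm⟩).2
    -- (1,5)
    · exfalso
      have hWs : W sMap := ((mp_app hFW sMap).mpr sMap_surj).2
      have hWid : W (𝟙 T1.{u}) := ((mp_app hFW (𝟙 T1.{u})).mpr Function.surjective_id).2
      have hWms : W (mMap ≫ sMap) := by rw [ms_eq]; exact hWid
      have hWm : W mMap := (h23 mMap sMap).2.2 hWs hWms
      have hCm : C mMap := (mp_app hC mMap).mpr mMap_inj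
      exact mMap_not_surj ((mp_app hCW mMap).mp ⟨hCm, hWm⟩).2
    -- (1,6) : model structure 9
    · refine Or.inr (Or.inr (Or.inr (Or.inr (Or.inr (Or.inr (Or.inr (Or.inr
        ⟨hC, hF, mp_ext fun A B f => ⟨?_, ?_⟩⟩)))))))
      · intro hw
        obtain ⟨E, l, r, hl, hr, hcmp⟩ := (hWchar f).mp hw
        have hl' : Bj l := (mp_app hCW l).mp hl
        have hr' : Bj r := (mp_app hFW r).mp hr
        have hbij : Function.Bijective (l ≫ r) := hr'.comp hl'
        rwa [hcmp] at hbij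
      · intro hb
        exact (hWchar f).mpr ⟨B, f, 𝟙 B, (mp_app hCW f).mpr hb,
          (mp_app hFW (𝟙 B)).mpr Function.bijective_id, Category.comp_id f⟩
    -- (2,1)
    · exact absurd ((mp_app hC sMap).mp ((mp_app hCW sMap).mpr sMap_surj).1)
        (fun hb => sMap_not_inj hb.1)
    -- (2,2) : model structure 2
    · refine Or.inr (Or.inl ⟨hC, hF, mp_ext fun A B f => ⟨fun _ => trivial, fun _ => ?_⟩⟩)
      obtain ⟨E, l, r, hl, hr, hcmp⟩ := isWFS_2.{u}.1 f
      exact (hWchar f).mpr ⟨E, l, r, (mp_app hCW l).mpr hl, (mp_app hFW r).mpr hr, hcmp⟩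
    -- (2,3)
    · exact absurd ((mp_app hC sMap).mp ((mp_app hCW sMap).mpr sMap_surj).1)
        (fun hb => sMap_not_inj hb.1)
    -- (2,4)
    · exfalso
      have hWe : W eMap := ((mp_app hFW eMap).mpr (Or.inr inferInstance)).2
      have hWe2 : W e2Map := ((mp_app hFW e2Map).mpr (Or.inr inferInstance)).2
      have hWem : W (eMap ≫ mMap) := by rw [em_eq]; exact hWe2
      have hWm : W mMap := (h23 eMap mMap).2.1 hWe hWem
      have hCm : C mMap := (mp_app hC mMap).mpr (Or.inl ⟨PUnit.unit⟩)
      exact mMap_not_surj ((mp_app hCW mMap).mp ⟨hCm, hWm⟩)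
    -- (2,5)
    · exact absurd ((mp_app hC sMap).mp ((mp_app hCW sMap).mpr sMap_surj).1) sMap_not_inj
    -- (2,6)
    · exfalso
      have hWs : W sMap := ((mp_app hCW sMap).mpr sMap_surj).2
      have hWid : W (𝟙 T1.{u}) := ((mp_app hFW (𝟙 T1.{u})).mpr Function.bijective_id).2
      have hWms : W (mMap ≫ sMap) := by rw [ms_eq]; exact hWid
      have hWm : W mMap := (h23 mMap sMap).2.2 hWs hWms
      have hCm : C mMap := (mp_app hC mMap).mpr trivial
      exact mMap_not_surj ((mp_app hCW mMap).mp ⟨hCm, hWm⟩)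
    -- (3,1)
    · exact absurd ((mp_app hC mMap).mp
        ((mp_app hCW mMap).mpr ⟨mMap_inj, Or.inl ⟨PUnit.unit⟩⟩).1)
        (fun hb => mMap_not_surj hb.2)
    -- (3,2)
    · exact absurd ((mp_app hC mMap).mp
        ((mp_app hCW mMap).mpr ⟨mMap_inj, Or.inl ⟨PUnit.unit⟩⟩).1) mMap_not_surj
    -- (3,3) : model structure 3
    · refine Or.inr (Or.inr (Or.inl ⟨hC, hF, mp_ext fun A B f =>
        ⟨fun _ => trivial, fun _ => ?_⟩⟩))
      obtain ⟨E, l, r, hl, hr, hcmp⟩ := isWFS_3.{u}.1 f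
      exact (hWchar f).mpr ⟨E, l, r, (mp_app hCW l).mpr hl, (mp_app hFW r).mpr hr, hcmp⟩
    -- (3,4)
    · exfalso
      have hWe : W eMap := ((mp_app hFW eMap).mpr (Or.inr inferInstance)).2
      have hWe2 : W e2Map := ((mp_app hFW e2Map).mpr (Or.inr inferInstance)).2
      have hWem : W (eMap ≫ mMap) := by rw [em_eq]; exact hWe2
      have hWm : W mMap := (h23 eMap mMap).2.1 hWe hWem
      have hWid : W (𝟙 T1.{u}) := ((mp_app hFW (𝟙 T1.{u})).mpr (Or.inl Function.bijective_id)).2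
      have hWms : W (mMap ≫ sMap) := by rw [ms_eq]; exact hWid
      have hWs : W sMap := (h23 mMap sMap).2.1 hWm hWms
      have hCs : C sMap := (mp_app hC sMap).mpr (Or.inl ⟨⟨true⟩⟩)
      exact sMap_not_inj ((mp_app hCW sMap).mp ⟨hCs, hWs⟩).1
    -- (3,5) : model structure 7
    · refine Or.inr (Or.inr (Or.inr (Or.inr (Or.inr (Or.inr (Or.inl
        ⟨hC, hF, mp_ext fun A B f => ⟨?_, ?_⟩⟩))))))
      · intro hw
        obtain ⟨E, l, r, hl, hr, hcmp⟩ := (hWchar f).mp hw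
        have hl' : IN l := (mp_app hCW l).mp hl
        have hr' : Sj r := (mp_app hFW r).mp hr
        rcases hl'.2 with hA | hE
        · exact Or.inl hA
        · refine Or.inr ⟨fun b => ?_⟩
          obtain ⟨x, -⟩ := hr' b
          exact hE.false x
      · intro hn
        by_cases hA : Nonempty A
        · exact (hWchar f).mpr ⟨Sum A B, TypeCat.ofHom Sum.inl, TypeCat.ofHom (Sum.elim f id),
            (mp_app hCW (TypeCat.ofHom Sum.inl)).mpr ⟨Sum.inl_injective, Or.inl hA⟩,
            (mp_app hFW (TypeCat.ofHom (Sum.elim f id))).mpr (fun b => ⟨Sum.inr b, rfl⟩), rfl⟩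
        · rw [not_nonempty_iff] at hA
          have hB : IsEmpty B :=
            (hn : Nonempty A ∨ IsEmpty B).resolve_left (not_nonempty_iff.mpr hA)
          exact (hWchar f).mpr ⟨A, 𝟙 A, f,
            (mp_app hCW (𝟙 A)).mpr ⟨fun _ _ hx => hx, Or.inr hA⟩,
            (mp_app hFW f).mpr (fun b => (hB.false b).elim), Category.id_comp f⟩
    -- (3,6)
    · exfalso
      have hWm : W mMap := ((mp_app hCW mMap).mpr ⟨mMap_inj, Or.inl ⟨PUnit.unit⟩⟩).2
      have hWid : W (𝟙 T1.{u}) := ((mp_app hFW (𝟙 T1.{u})).mpr Function.bijective_id).2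
      have hWms : W (mMap ≫ sMap) := by rw [ms_eq]; exact hWid
      have hWs : W sMap := (h23 mMap sMap).2.1 hWm hWms
      have hCs : C sMap := (mp_app hC sMap).mpr trivial
      exact sMap_not_inj ((mp_app hCW sMap).mp ⟨hCs, hWs⟩).1
    -- (4,1)
    · exact absurd ((mp_app hC sMap).mp ((mp_app hCW sMap).mpr (Or.inl ⟨⟨true⟩⟩)).1)
        (fun hb => sMap_not_inj hb.1)
    -- (4,2)
    · exact absurd ((mp_app hC mMap).mp ((mp_app hCW mMap).mpr (Or.inl ⟨PUnit.unit⟩)).1)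
        mMap_not_surj
    -- (4,3)
    · exact absurd ((mp_app hC sMap).mp ((mp_app hCW sMap).mpr (Or.inl ⟨⟨true⟩⟩)).1)
        (fun hb => sMap_not_inj hb.1)
    -- (4,4) : model structure 4
    · refine Or.inr (Or.inr (Or.inr (Or.inl ⟨hC, hF, mp_ext fun A B f =>
        ⟨fun _ => trivial, fun _ => ?_⟩⟩)))
      obtain ⟨E, l, r, hl, hr, hcmp⟩ := isWFS_4.{u}.1 f
      exact (hWchar f).mpr ⟨E, l, r, (mp_app hCW l).mpr hl, (mp_app hFW r).mpr hr, hcmp⟩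
    -- (4,5)
    · exact absurd ((mp_app hC sMap).mp ((mp_app hCW sMap).mpr (Or.inl ⟨⟨true⟩⟩)).1)
        sMap_not_inj
    -- (4,6) : model structure 8
    · refine Or.inr (Or.inr (Or.inr (Or.inr (Or.inr (Or.inr (Or.inr (Or.inl
        ⟨hC, hF, mp_ext fun A B f => ⟨?_, ?_⟩⟩)))))))
      · intro hw
        obtain ⟨E, l, r, hl, hr, hcmp⟩ := (hWchar f).mp hw
        have hl' : NEC l := (mp_app hCW l).mp hl
        have hr' : Bj r := (mp_app hFW r).mp hr
        rcases hl' with hA | hE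
        · exact Or.inl hA
        · refine Or.inr ⟨fun b => ?_⟩
          obtain ⟨x, -⟩ := hr'.2 b
          exact hE.false x
      · intro hn
        exact (hWchar f).mpr ⟨B, f, 𝟙 B, (mp_app hCW f).mpr hn,
          (mp_app hFW (𝟙 B)).mpr Function.bijective_id, Category.comp_id f⟩
    -- (5,1)
    · exact absurd ((mp_app hC mMap).mp ((mp_app hCW mMap).mpr mMap_inj).1)
        (fun hb => mMap_not_surj hb.2)
    -- (5,2)
    · exact absurd ((mp_app hC mMap).mp ((mp_app hCW mMap).mpr mMap_inj).1) mMap_not_surj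
    -- (5,3)
    · exact absurd ((mp_app hC eMap).mp ((mp_app hCW eMap).mpr eMap_inj).1)
        (fun hb => e_not_nec hb.2)
    -- (5,4)
    · exact absurd ((mp_app hC eMap).mp ((mp_app hCW eMap).mpr eMap_inj).1) e_not_nec
    -- (5,5) : model structure 5
    · refine Or.inr (Or.inr (Or.inr (Or.inr (Or.inl ⟨hC, hF, mp_ext fun A B f =>
        ⟨fun _ => trivial, fun _ => ?_⟩⟩))))
      obtain ⟨E, l, r, hl, hr, hcmp⟩ := isWFS_5.{u}.1 f
      exact (hWchar f).mpr ⟨E, l, r, (mp_app hCW l).mpr hl, (mp_app hFW r).mpr hr, hcmp⟩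
    -- (5,6)
    · exfalso
      have hWm : W mMap := ((mp_app hCW mMap).mpr mMap_inj).2
      have hWid : W (𝟙 T1.{u}) := ((mp_app hFW (𝟙 T1.{u})).mpr Function.bijective_id).2
      have hWms : W (mMap ≫ sMap) := by rw [ms_eq]; exact hWid
      have hWs : W sMap := (h23 mMap sMap).2.1 hWm hWms
      have hCs : C sMap := (mp_app hC sMap).mpr trivial
      exact sMap_not_inj ((mp_app hCW sMap).mp ⟨hCs, hWs⟩)
    -- (6,1)
    · exact absurd ((mp_app hC sMap).mp ((mp_app hCW sMap).mpr trivial).1)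
        (fun hb => sMap_not_inj hb.1)
    -- (6,2)
    · exact absurd ((mp_app hC mMap).mp ((mp_app hCW mMap).mpr trivial).1) mMap_not_surj
    -- (6,3)
    · exact absurd ((mp_app hC sMap).mp ((mp_app hCW sMap).mpr trivial).1)
        (fun hb => sMap_not_inj hb.1)
    -- (6,4)
    · exact absurd ((mp_app hC eMap).mp ((mp_app hCW eMap).mpr trivial).1) e_not_nec
    -- (6,5)
    · exact absurd ((mp_app hC sMap).mp ((mp_app hCW sMap).mpr trivial).1) sMap_not_inj
    -- (6,6) : model structure 6
    · refine Or.inr (Or.inr (Or.inr (Or.inr (Or.inr (Or.inl ⟨hC, hF, mp_ext fun A B f =>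
        ⟨fun _ => trivial, fun _ => ?_⟩⟩)))))
      obtain ⟨E, l, r, hl, hr, hcmp⟩ := isWFS_6.{u}.1 f
      exact (hWchar f).mpr ⟨E, l, r, (mp_app hCW l).mpr hl, (mp_app hFW r).mpr hr, hcmp⟩
  · rintro (⟨hC, hF, hW⟩ | ⟨hC, hF, hW⟩ | ⟨hC, hF, hW⟩ | ⟨hC, hF, hW⟩ | ⟨hC, hF, hW⟩ |
      ⟨hC, hF, hW⟩ | ⟨hC, hF, hW⟩ | ⟨hC, hF, hW⟩ | ⟨hC, hF, hW⟩) <;>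
      subst hC <;> subst hF <;> subst hW
    · refine ⟨two33_all, ?_, ?_⟩
      · show IsWFS (interMP Bj.{u} Al.{u}) Al.{u}
        rw [interMP_all_right]
        exact isWFS_1
      · show IsWFS Bj.{u} (interMP Al.{u} Al.{u})
        rw [interMP_all_right]
        exact isWFS_1
    · refine ⟨two33_all, ?_, ?_⟩
      · show IsWFS (interMP Sj.{u} Al.{u}) Ij.{u}
        rw [interMP_all_right]
        exact isWFS_2
      · show IsWFS Sj.{u} (interMP Ij.{u} Al.{u})
        rw [interMP_all_right]
        exact isWFS_2
    · refine ⟨two33_all, ?_, ?_⟩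
      · show IsWFS (interMP IN.{u} Al.{u}) SD.{u}
        rw [interMP_all_right]
        exact isWFS_3
      · show IsWFS IN.{u} (interMP SD.{u} Al.{u})
        rw [interMP_all_right]
        exact isWFS_3
    · refine ⟨two33_all, ?_, ?_⟩
      · show IsWFS (interMP NEC.{u} Al.{u}) BD.{u}
        rw [interMP_all_right]
        exact isWFS_4
      · show IsWFS NEC.{u} (interMP BD.{u} Al.{u})
        rw [interMP_all_right]
        exact isWFS_4
    · refine ⟨two33_all, ?_, ?_⟩
      · show IsWFS (interMP Ij.{u} Al.{u}) Sj.{u}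
        rw [interMP_all_right]
        exact isWFS_5
      · show IsWFS Ij.{u} (interMP Sj.{u} Al.{u})
        rw [interMP_all_right]
        exact isWFS_5
    · refine ⟨two33_all, ?_, ?_⟩
      · show IsWFS (interMP Al.{u} Al.{u}) Bj.{u}
        rw [interMP_all_right]
        exact isWFS_6
      · show IsWFS Al.{u} (interMP Bj.{u} Al.{u})
        rw [interMP_all_right]
        exact isWFS_6
    · refine ⟨two33_nec, ?_, ?_⟩
      · show IsWFS (interMP Ij.{u} NEC.{u}) SD.{u}
        exact isWFS_3
      · show IsWFS Ij.{u} (interMP SD.{u} NEC.{u})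
        rw [interMP_SD_NEC]
        exact isWFS_5
    · refine ⟨two33_nec, ?_, ?_⟩
      · show IsWFS (interMP Al.{u} NEC.{u}) BD.{u}
        rw [interMP_all_left]
        exact isWFS_4
      · show IsWFS Al.{u} (interMP BD.{u} NEC.{u})
        rw [interMP_BD_NEC]
        exact isWFS_6
    · refine ⟨two33_bij, ?_, ?_⟩
      · show IsWFS (interMP Al.{u} Bj.{u}) Al.{u}
        rw [interMP_all_left]
        exact isWFS_1
      · show IsWFS Al.{u} (interMP Al.{u} Bj.{u})
        rw [interMP_all_left]
        exact isWFS_6
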